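/- For all positive integers n, k and every partition α with at most k parts each at most n, the multiset of arm–leg pairs, computed in T*, of the cells of T*₁ equals the multiset of arm–leg pairs, computed in R, of the cells of R₂; that is, AL_{T*}(T*₁) = AL_R(R₂) as multisets of pairs. -/
import Mathlib


/-- The skew diagram with rows `a,…,b`, where row `i` contains the cells
`(i,j)` for `lo i ≤ j ≤ hi i`. -/
def skewD (a b : ℕ) (lo hi : ℕ → ℕ) : Finset (ℕ × ℕ) :=
  (Finset.Icc a b).biUnion fun i => (Finset.Icc (lo i) (hi i)).image fun j => (i, j)

/-- Arm length: number of cells of `G` in the same row, strictly to the right. -/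
def arm (G : Finset (ℕ × ℕ)) (x : ℕ × ℕ) : ℕ :=
  (G.filter fun y => y.1 = x.1 ∧ x.2 < y.2).card

/-- Leg length: number of cells of `G` in the same column, strictly below
(rows are numbered bottom to top). -/
def leg (G : Finset (ℕ × ℕ)) (x : ℕ × ℕ) : ℕ :=
  (G.filter fun y => y.2 = x.2 ∧ y.1 < x.1).card

/-- Multiset of arm–leg pairs of the cells of `E`, computed in `G`. -/
def AL (G E : Finset (ℕ × ℕ)) : Multiset (ℕ × ℕ) :=
  E.val.map fun x => (arm G x, leg G x)

/-- Multiset of hook lengths of `G`. -/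
def hookMS (G : Finset (ℕ × ℕ)) : Multiset ℕ :=
  G.val.map fun x => arm G x + leg G x + 1

/-- The skew diagram `T`. -/
def TT (n k : ℕ) (α : ℕ → ℕ) : Finset (ℕ × ℕ) :=
  skewD 1 k (fun i => α 1 - α i + 1) (fun i => n + α 1 - α i)

/-- The skew diagram `V`. -/
def VV (n k : ℕ) (α : ℕ → ℕ) : Finset (ℕ × ℕ) :=
  skewD (k + 1) (2 * k) (fun i => n + α 1 - α (i - k) + 1) (fun _ => n + α 1)

/-- The skew diagram `SQ = T ∪ V`. -/
def SQ (n k : ℕ) (α : ℕ → ℕ) : Finset (ℕ × ℕ) :=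
  TT n k α ∪ VV n k α

/-- The `k × n` rectangle `R`. -/
def RR (n k : ℕ) : Finset (ℕ × ℕ) :=
  skewD 1 k (fun _ => 1) (fun _ => n)

/-- The Young diagram `D` of `α`. -/
def DD (k : ℕ) (α : ℕ → ℕ) : Finset (ℕ × ℕ) :=
  skewD 1 k (fun _ => 1) (fun i => α (k + 1 - i))

/-- The 180° rotation `T*` of `T`. -/
def Tstar (n k : ℕ) (α : ℕ → ℕ) : Finset (ℕ × ℕ) :=
  skewD 1 k (fun i => α (k + 1 - i) - α k + 1) (fun i => n + α (k + 1 - i) - α k)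

/-- The region `R₂` of the rectangle `R`. -/
def RRtwo (n k : ℕ) (α : ℕ → ℕ) : Finset (ℕ × ℕ) :=
  skewD 1 k (fun _ => 1) (fun i => n - α (k + 1 - i))

/-- The region `T*₁` of `T*`. -/
def TstarOne (n k : ℕ) (α : ℕ → ℕ) : Finset (ℕ × ℕ) :=
  skewD 1 k (fun i => α (k + 1 - i) - α k + 1) (fun _ => n - α k)

lemma mem_skewD {a b : ℕ} {lo hi : ℕ → ℕ} {x : ℕ × ℕ} :
    x ∈ skewD a b lo hi ↔ a ≤ x.1 ∧ x.1 ≤ b ∧ lo x.1 ≤ x.2 ∧ x.2 ≤ hi x.1 := by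
  obtain ⟨i, j⟩ := x
  simp only [skewD, Finset.mem_biUnion, Finset.mem_image, Finset.mem_Icc, Prod.mk.injEq]
  constructor
  · rintro ⟨i', ⟨h1, h2⟩, j', ⟨h3, h4⟩, rfl, rfl⟩
    exact ⟨h1, h2, h3, h4⟩
  · rintro ⟨h1, h2, h3, h4⟩
    exact ⟨i, ⟨h1, h2⟩, j, ⟨h3, h4⟩, rfl, rfl⟩

lemma arm_skewD (a b : ℕ) (lo hi : ℕ → ℕ) (i j : ℕ) (h1 : a ≤ i) (h2 : i ≤ b) :
    arm (skewD a b lo hi) (i, j) = hi i + 1 - max (lo i) (j + 1) := by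
  have key : (skewD a b lo hi).filter (fun y => y.1 = (i, j).1 ∧ (i, j).2 < y.2)
      = (Finset.Icc (max (lo i) (j + 1)) (hi i)).image (fun c => (i, c)) := by
    ext ⟨p, q⟩
    simp only [Finset.mem_filter, mem_skewD, Finset.mem_image, Finset.mem_Icc, Prod.mk.injEq]
    constructor
    · rintro ⟨⟨ha, hb, hc, hd⟩, rfl, hj⟩
      exact ⟨q, ⟨by omega, hd⟩, rfl, rfl⟩
    · rintro ⟨c, ⟨hc1, hc2⟩, rfl, rfl⟩
      exact ⟨⟨h1, h2, by omega, hc2⟩, rfl, by omega⟩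
  rw [arm, key, Finset.card_image_of_injective _ (fun x y h => by simpa using h),
    Nat.card_Icc]

lemma leg_skewD (a b : ℕ) (lo hi : ℕ → ℕ) (i j : ℕ) (ha : a ≤ i) (hb : i ≤ b + 1)
    (h : ∀ i', a ≤ i' → i' < i → lo i' ≤ j ∧ j ≤ hi i') :
    leg (skewD a b lo hi) (i, j) = i - a := by
  have key : (skewD a b lo hi).filter (fun y => y.2 = (i, j).2 ∧ y.1 < (i, j).1)
      = (Finset.Ico a i).image (fun r => (r, j)) := by
    ext ⟨p, q⟩
    simp only [Finset.mem_filter, mem_skewD, Finset.mem_image, Finset.mem_Ico, Prod.mk.injEq]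
    constructor
    · rintro ⟨⟨h1, h2, h3, h4⟩, rfl, hp⟩
      exact ⟨p, ⟨h1, hp⟩, rfl, rfl⟩
    · rintro ⟨r, ⟨hr1, hr2⟩, rfl, rfl⟩
      obtain ⟨c1, c2⟩ := h r hr1 hr2
      exact ⟨⟨hr1, by omega, c1, c2⟩, rfl, hr2⟩
  rw [leg, key, Finset.card_image_of_injective _ (fun x y h => by simpa using h),
    Nat.card_Ico]

/-- `AL_{T*}(T*₁) = AL_R(R₂)`. -/
theorem AL_Tstar_TstarOne_eq_AL_R_Rtwo (n k : ℕ) (α : ℕ → ℕ) (hn : 0 < n)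
    (hk : 0 < k) (hα1 : α 1 ≤ n)
    (hmono : ∀ i j, 1 ≤ i → i ≤ j → j ≤ k → α j ≤ α i) :
    AL (Tstar n k α) (TstarOne n k α) = AL (RR n k) (RRtwo n k α) := by

  classical
  have hβk : ∀ i, 1 ≤ i → i ≤ k → α k ≤ α (k + 1 - i) ∧ α (k + 1 - i) ≤ n := by
    intro i h1 h2
    have e1 : 1 ≤ k + 1 - i := by omega
    have e2 : k + 1 - i ≤ k := by omega
    have := hmono (k + 1 - i) k e1 e2 le_rfl
    have := hmono 1 (k + 1 - i) le_rfl e1 e2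
    exact ⟨by assumption, le_trans (by assumption) hα1⟩
  have hβmono : ∀ i i', 1 ≤ i' → i' ≤ i → i ≤ k → α (k + 1 - i') ≤ α (k + 1 - i) := by
    intro i i' h1 h2 h3
    exact hmono (k + 1 - i) (k + 1 - i') (by omega) (by omega) (by omega)
  set e : ℕ × ℕ → ℕ × ℕ := fun x => (x.1, x.2 - (α (k + 1 - x.1) - α k)) with he
  have himg : RRtwo n k α = (TstarOne n k α).image e := by
    ext ⟨p, q⟩
    simp only [RRtwo, TstarOne, mem_skewD, Finset.mem_image, he, Prod.exists, Prod.mk.injEq]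
    constructor
    · rintro ⟨h1, h2, h3, h4⟩
      obtain ⟨c1, c2⟩ := hβk p h1 h2
      exact ⟨p, q + (α (k + 1 - p) - α k), ⟨h1, h2, by omega, by omega⟩, by trivial, by omega⟩
    · rintro ⟨r, s, ⟨h1, h2, h3, h4⟩, rfl, rfl⟩
      obtain ⟨c1, c2⟩ := hβk r h1 h2
      exact ⟨h1, h2, by omega, by omega⟩
  have hinj : Set.InjOn e (TstarOne n k α) := by
    rintro ⟨p, q⟩ hx ⟨p', q'⟩ hy hxy
    simp only [Finset.mem_coe, TstarOne, mem_skewD] at hx hy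
    simp only [he, Prod.mk.injEq] at hxy
    obtain ⟨rfl, h2⟩ := hxy
    simp only [Prod.mk.injEq]
    refine ⟨by trivial, ?_⟩
    have := hx.2.2.1
    have := hy.2.2.1
    omega
  rw [AL, AL, himg, Finset.image_val_of_injOn hinj, Multiset.map_map]
  refine Multiset.map_congr rfl ?_
  rintro ⟨i, j⟩ hx
  rw [Finset.mem_val] at hx
  have hx' := hx
  simp only [TstarOne, mem_skewD] at hx'
  obtain ⟨h1, h2, h3, h4⟩ := hx'
  obtain ⟨c1, c2⟩ := hβk i h1 h2
  simp only [Function.comp_apply, he, Prod.mk.injEq]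
  constructor
  · -- arms agree
    rw [Tstar, arm_skewD _ _ _ _ _ _ h1 h2, RR, arm_skewD _ _ _ _ _ _ h1 h2]
    omega
  · -- legs agree
    rw [Tstar, leg_skewD _ _ _ _ _ _ h1 (by omega) ?ht, RR,
      leg_skewD _ _ _ _ _ _ h1 (by omega) ?hr]
    case ht =>
      intro i' hi1 hi2
      obtain ⟨d1, d2⟩ := hβk i' hi1 (by omega)
      have hm := hβmono i i' hi1 (by omega) h2
      constructor <;> omega
    case hr =>
      intro i' hi1 hi2
      exact ⟨by omega, by omega⟩
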